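/- Suppose η : ℤ² → A is aperiodic and there exist n, k with P_η(R_{n,k}) ≤ nk/2. Then there exists an η-generating set S ⊂ R_{n,k} such that (i) D_η(S) ≤ −|S|/2, (ii) for every boundary edge w of S, D_η(S \ w) ≥ D_η(S) + ⌈|w ∩ S|/2⌉, and (iii) every nonempty proper convex subset T ⊂ S satisfies D_η(T) > D_η(S). -/

import Mathlib

open Classical

namespace Nivat

noncomputable section

/-- Embedding of `ℤ × ℤ` into `ℝ × ℝ`. -/
def e (p : ℤ × ℤ) : ℝ × ℝ := ((p.1 : ℝ), (p.2 : ℝ))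

/-- A finite set `S ⊆ ℤ²` is convex if `S = conv(S) ∩ ℤ²`. -/
def IsConvexSet (S : Finset (ℤ × ℤ)) : Prop :=
  ∀ p : ℤ × ℤ, e p ∈ convexHull ℝ (e '' (S : Set (ℤ × ℤ))) → p ∈ S

variable {A : Type*}

/-- The `η`-coloring of `S` induced by the translate by `u`. -/
def pat (η : ℤ × ℤ → A) (S : Finset (ℤ × ℤ)) (u : ℤ × ℤ) : S → A :=
  fun x => η ((x : ℤ × ℤ) + u)

/-- `P_η(S)`: number of distinct `η`-colorings of `S`. -/
def Pc (η : ℤ × ℤ → A) (S : Finset (ℤ × ℤ)) : ℕ :=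
  (Set.range (pat η S)).ncard

/-- Discrepancy `D_η(S) = P_η(S) - |S|`. -/
def Dc (η : ℤ × ℤ → A) (S : Finset (ℤ × ℤ)) : ℤ :=
  (Pc η S : ℤ) - (S.card : ℤ)

/-- Restriction of a coloring of `S` to a subset `T`. -/
def res {S T : Finset (ℤ × ℤ)} (h : T ⊆ S) (f : S → A) : T → A :=
  fun x => f ⟨(x : ℤ × ℤ), h x.2⟩

/-- A coloring `α` of `T` extends uniquely to an `η`-coloring of `S`. -/
def ExtendsUniquely (η : ℤ × ℤ → A) {T S : Finset (ℤ × ℤ)} (h : T ⊆ S) (α : T → A) : Prop :=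
  ∃! β : S → A, β ∈ Set.range (pat η S) ∧ res h β = α

/-- A coloring `α` of `T` has at least two extensions to `η`-colorings of `S`. -/
def ExtendsNonUniquely (η : ℤ × ℤ → A) {T S : Finset (ℤ × ℤ)} (h : T ⊆ S) (α : T → A) : Prop :=
  ∃ β₁ β₂ : S → A, β₁ ∈ Set.range (pat η S) ∧ β₂ ∈ Set.range (pat η S) ∧
    β₁ ≠ β₂ ∧ res h β₁ = α ∧ res h β₂ = α

theorem eraseSub (S : Finset (ℤ × ℤ)) (x : ℤ × ℤ) : S.erase x ⊆ S :=
  fun _ hy => Finset.mem_of_mem_erase hy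

theorem sdiffSub (S T : Finset (ℤ × ℤ)) : S \ T ⊆ S :=
  fun _ hy => (Finset.mem_sdiff.mp hy).1

/-- `x ∈ S` is `η`-generated by `S`: every `η`-coloring of `S \ {x}`
extends uniquely to an `η`-coloring of `S`. -/
def Generated (η : ℤ × ℤ → A) (S : Finset (ℤ × ℤ)) (x : ℤ × ℤ) : Prop :=
  ∀ α ∈ Set.range (pat η (S.erase x)), ExtendsUniquely η (eraseSub S x) α

/-- `x` is an extreme point of the convex polygon `conv(S)`. -/
def IsExtremePt (S : Finset (ℤ × ℤ)) (x : ℤ × ℤ) : Prop :=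
  e x ∈ Set.extremePoints ℝ (convexHull ℝ (e '' (S : Set (ℤ × ℤ))))

/-- A weak `η`-generating set: finite, nonempty, convex, and every extreme
point is `η`-generated. -/
def WeakGenerating (η : ℤ × ℤ → A) (S : Finset (ℤ × ℤ)) : Prop :=
  S.Nonempty ∧ IsConvexSet S ∧ ∀ x ∈ S, IsExtremePt S x → Generated η S x

/-- An `η`-generating set: weak generating and every nonempty proper convex
subset has strictly larger discrepancy. -/
def Generating (η : ℤ × ℤ → A) (S : Finset (ℤ × ℤ)) : Prop :=
  WeakGenerating η S ∧
    ∀ T ⊆ S, T ≠ S → T.Nonempty → IsConvexSet T → Dc η S < Dc η T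

/-- The segment from `e p` to `e q` is a (1-dimensional exposed) boundary edge
of the convex polygon `conv(S)`. -/
def IsEdge (S : Finset (ℤ × ℤ)) (p q : ℤ × ℤ) : Prop :=
  p ≠ q ∧ p ∈ S ∧ q ∈ S ∧ ∃ ℓ : (ℝ × ℝ) →ₗ[ℝ] ℝ, ∃ c : ℝ,
    (∀ x ∈ convexHull ℝ (e '' (S : Set (ℤ × ℤ))), ℓ x ≤ c) ∧
    {x ∈ convexHull ℝ (e '' (S : Set (ℤ × ℤ))) | ℓ x = c} = segment ℝ (e p) (e q)

/-- An edge of `S`, oriented positively (the set lies to the left of `p → q`). -/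
def IsOrientedEdge (S : Finset (ℤ × ℤ)) (p q : ℤ × ℤ) : Prop :=
  IsEdge S p q ∧ ∀ x ∈ S, 0 ≤ (q.1 - p.1) * (x.2 - p.2) - (q.2 - p.2) * (x.1 - p.1)

/-- The lattice points of `S` lying on the edge from `p` to `q`. -/
def edgePts (S : Finset (ℤ × ℤ)) (p q : ℤ × ℤ) : Finset (ℤ × ℤ) :=
  S.filter (fun x => e x ∈ segment ℝ (e p) (e q))

/-- The rectangle `R_{n,k} = [0,n) × [0,k) ∩ ℤ²`. -/
def Rect (n k : ℕ) : Finset (ℤ × ℤ) :=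
  Finset.Ico (0 : ℤ) (n : ℤ) ×ˢ Finset.Ico (0 : ℤ) (k : ℤ)

/-- `η` is aperiodic: no nonzero period vector. -/
def Aperiodic (η : ℤ × ℤ → A) : Prop :=
  ∀ v : ℤ × ℤ, v ≠ 0 → ∃ x : ℤ × ℤ, η (x + v) ≠ η x

/-- Action of a `2 × 2` integer matrix on `ℤ²`. -/
def Mv (M : Matrix (Fin 2) (Fin 2) ℤ) (p : ℤ × ℤ) : ℤ × ℤ :=
  (M 0 0 * p.1 + M 0 1 * p.2, M 1 0 * p.1 + M 1 1 * p.2)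

/-- `u` and `v` are positively parallel (same direction). -/
def PosParallel (u v : ℤ × ℤ) : Prop :=
  ∃ t₁ t₂ : ℤ, 0 < t₁ ∧ 0 < t₂ ∧ t₁ • u = t₂ • v

/-- The directed rational line through the origin with direction `d` is
one-sided `η`-expansive: for some `a, b ∈ ℕ` and `A ∈ SL₂(ℤ)` taking the
downward `y`-axis to the direction `d`, every `(η ∘ A)`-coloring of
`[0,a] × [-b,b]` extends uniquely to `[0,a] × [-b,b] ∪ {(-1,0)}`. -/
def OneSidedExpansive (η : ℤ × ℤ → A) (d : ℤ × ℤ) : Prop :=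
  ∃ a b : ℕ, ∃ M : Matrix (Fin 2) (Fin 2) ℤ, M.det = 1 ∧
    PosParallel (Mv M (0, -1)) d ∧
    ∀ u v : ℤ × ℤ,
      (∀ x : ℤ × ℤ, 0 ≤ x.1 → x.1 ≤ (a : ℤ) → -(b : ℤ) ≤ x.2 → x.2 ≤ (b : ℤ) →
        η (Mv M (x + u)) = η (Mv M (x + v))) →
      η (Mv M ((-1, 0) + u)) = η (Mv M ((-1, 0) + v))

end

end Nivat

/-!
Take `S` minimizing `2 D_η(T) + |T| = 2 P_η(T) - |T|` over all convex `T ⊆ R_{n,k}`, the empty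
set included. Since `2 P_η(R_{n,k}) ≤ |R_{n,k}|`, the minimum is `≤ 0 < 2 = 2 D_η(∅)`, which gives
(i) and `S ≠ ∅`. Comparing `S` with a proper convex subset `T` gives (iii), because `|T| < |S|`;
comparing it with the convex set `S \ w` gives (ii). Finally, if an extreme point `x` were not
generated, restricting colorings of `S` to `S \ {x}` would not be injective, so
`P_η(S \ {x}) < P_η(S)`, i.e. `D_η(S \ {x}) ≤ D_η(S)`, contradicting (iii).
-/

namespace Nivat

theorem e_le_e {p q : ℤ × ℤ} : e p ≤ e q ↔ p ≤ q := by
  simp only [e, Prod.le_def, Int.cast_le]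

theorem e_injective : Function.Injective e := fun _ _ h =>
  le_antisymm (e_le_e.1 h.le) (e_le_e.1 h.ge)

section Convexity

variable {S : Finset (ℤ × ℤ)}

theorem e_mem_convexHull {p : ℤ × ℤ} (hp : p ∈ S) : e p ∈ convexHull ℝ (e '' (S : Set (ℤ × ℤ))) :=
  subset_convexHull ℝ _ (Set.mem_image_of_mem e hp)

theorem isConvexSet_of_mem_iff {K : Set (ℝ × ℝ)} (hK : Convex ℝ K)
    (hS : ∀ p, p ∈ S ↔ e p ∈ K) : IsConvexSet S := fun p hp =>
  (hS p).2 <| convexHull_min (by rintro _ ⟨q, hq, rfl⟩; exact (hS q).1 hq) hK hp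

theorem isConvexSet_rect (n k : ℕ) : IsConvexSet (Rect n k) := by
  refine isConvexSet_of_mem_iff (convex_Icc (e 0) (e ((n : ℤ) - 1, (k : ℤ) - 1))) fun p => ?_
  rw [Set.mem_Icc, e_le_e, e_le_e]
  simp only [Rect, Finset.mem_product, Finset.mem_Ico, Prod.le_def, Prod.fst_zero, Prod.snd_zero]
  omega

theorem IsConvexSet.filter_mem (hS : IsConvexSet S) {K : Set (ℝ × ℝ)} (hK : Convex ℝ K) :
    IsConvexSet (S.filter fun p => e p ∈ K) :=
  isConvexSet_of_mem_iff ((convex_convexHull ℝ _).inter hK) fun p => by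
    rw [Finset.mem_filter, Set.mem_inter_iff]
    exact and_congr_left fun _ => ⟨e_mem_convexHull, hS p⟩

theorem IsConvexSet.erase (hS : IsConvexSet S) {x : ℤ × ℤ} (hx : IsExtremePt S x) :
    IsConvexSet (S.erase x) := by
  convert hS.filter_mem ((convex_convexHull ℝ _).mem_extremePoints_iff_convex_sdiff.1 hx).2
    using 1
  ext p
  simp only [Finset.mem_erase, Finset.mem_filter, Set.mem_sdiff, Set.mem_singleton_iff,
    e_injective.eq_iff]
  have := @e_mem_convexHull S p
  tauto

theorem IsConvexSet.sdiff_edgePts (hS : IsConvexSet S) {p q : ℤ × ℤ} (hpq : IsEdge S p q) :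
    IsConvexSet (S \ edgePts S p q) := by
  obtain ⟨-, -, -, ℓ, c, hle, hface⟩ := hpq
  convert hS.filter_mem (convex_halfSpace_lt ℓ.isLinear c) using 1
  ext r
  simp only [Finset.mem_sdiff, edgePts, Finset.mem_filter, ← hface, Set.mem_ofPred_eq]
  refine and_congr_right fun hr => ?_
  have hr' := e_mem_convexHull hr
  rw [(hle _ hr').lt_iff_ne]
  tauto

end Convexity

section Counting

variable {A : Type*} (η : ℤ × ℤ → A)

theorem range_pat_eq_image_res {T S : Finset (ℤ × ℤ)} (h : T ⊆ S) :
    Set.range (pat η T) = res h '' Set.range (pat η S) := by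
  rw [← Set.range_comp]
  rfl

variable [Finite A]

theorem Pc_pos (S : Finset (ℤ × ℤ)) : 0 < Pc η S :=
  (Set.ncard_pos (Set.toFinite _)).2 ⟨pat η S 0, 0, rfl⟩

theorem Pc_lt_of_not_extendsUniquely {T S : Finset (ℤ × ℤ)} (h : T ⊆ S) {α : T → A}
    (hα : α ∈ Set.range (pat η T)) (hnu : ¬ ExtendsUniquely η h α) : Pc η T < Pc η S := by
  obtain ⟨u, rfl⟩ := hα
  have hnotinj : ¬ Set.InjOn (res h) (Set.range (pat η S)) := fun hinj =>
    hnu ⟨pat η S u, ⟨⟨u, rfl⟩, rfl⟩, fun β ⟨hβ, hres⟩ => hinj hβ ⟨u, rfl⟩ hres⟩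
  rw [Pc, Pc, range_pat_eq_image_res η h]
  exact (Set.ncard_image_le (Set.toFinite _)).lt_of_ne
    (mt (Set.ncard_image_iff (Set.toFinite _)).1 hnotinj)

theorem Dc_erase_le_of_not_generated {S : Finset (ℤ × ℤ)} {x : ℤ × ℤ} (hx : x ∈ S)
    (hgen : ¬ Generated η S x) : Dc η (S.erase x) ≤ Dc η S := by
  simp only [Generated, not_forall] at hgen
  obtain ⟨α, hα, hnu⟩ := hgen
  have := Pc_lt_of_not_extendsUniquely η (eraseSub S x) hα hnu
  have := Finset.card_erase_add_one hx
  simp only [Dc]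
  omega

end Counting

section Minimizer

variable {A : Type*}

noncomputable def weightedDc (η : ℤ × ℤ → A) (T : Finset (ℤ × ℤ)) : ℤ := 2 * Dc η T + T.card

theorem exists_isMinOn_weightedDc (η : ℤ × ℤ → A) (R : Finset (ℤ × ℤ)) :
    ∃ S, (S ⊆ R ∧ IsConvexSet S) ∧ IsMinOn (weightedDc η) {T | T ⊆ R ∧ IsConvexSet T} S := by
  obtain ⟨S, hS, hmin⟩ := Finset.exists_min_image (R.powerset.filter IsConvexSet) (weightedDc η)
    ⟨∅, by simp [IsConvexSet]⟩
  exact ⟨S, by simpa using hS, isMinOn_iff.2 fun T hT => hmin T (by simpa using hT)⟩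

variable {η : ℤ × ℤ → A} {R S : Finset (ℤ × ℤ)}

theorem Dc_lt_of_isMinOn (hmin : IsMinOn (weightedDc η) {T | T ⊆ R ∧ IsConvexSet T} S)
    (hSR : S ⊆ R) {T : Finset (ℤ × ℤ)} (hTS : T ⊂ S) (hT : IsConvexSet T) :
    Dc η S < Dc η T := by
  have hφ : weightedDc η S ≤ weightedDc η T := hmin ⟨hTS.subset.trans hSR, hT⟩
  have := Finset.card_lt_card hTS
  simp only [weightedDc] at hφ
  omega

theorem Dc_add_le_Dc_sdiff_edgePts_of_isMinOn
    (hmin : IsMinOn (weightedDc η) {T | T ⊆ R ∧ IsConvexSet T} S) (hSR : S ⊆ R)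
    (hS : IsConvexSet S) {p q : ℤ × ℤ} (hpq : IsEdge S p q) :
    Dc η S + ((((edgePts S p q).card + 1) / 2 : ℕ) : ℤ) ≤ Dc η (S \ edgePts S p q) := by
  have hφ : weightedDc η S ≤ weightedDc η (S \ edgePts S p q) :=
    hmin ⟨Finset.sdiff_subset.trans hSR, hS.sdiff_edgePts hpq⟩
  have hw : edgePts S p q ⊆ S := Finset.filter_subset _ S
  have := Finset.card_sdiff_add_card_eq_card hw
  simp only [weightedDc] at hφ
  omega

theorem generated_of_isMinOn [Finite A]
    (hmin : IsMinOn (weightedDc η) {T | T ⊆ R ∧ IsConvexSet T} S) (hSR : S ⊆ R)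
    (hS : IsConvexSet S) {x : ℤ × ℤ} (hx : x ∈ S) (hext : IsExtremePt S x) : Generated η S x := by
  by_contra hgen
  exact (Dc_lt_of_isMinOn hmin hSR (Finset.erase_ssubset hx) (hS.erase hext)).not_ge
    (Dc_erase_le_of_not_generated η hx hgen)

end Minimizer

theorem card_rect (n k : ℕ) : (Rect n k).card = n * k := by
  simp [Rect]

theorem statement14_general {A : Type*} [Finite A] (η : ℤ × ℤ → A) (n k : ℕ)
    (hP : 2 * Pc η (Rect n k) ≤ n * k) :
    ∃ S : Finset (ℤ × ℤ), S ⊆ Rect n k ∧ Generating η S ∧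
      2 * Dc η S ≤ -(S.card : ℤ) ∧
      (∀ p q : ℤ × ℤ, IsEdge S p q →
        Dc η S + ((((edgePts S p q).card + 1) / 2 : ℕ) : ℤ) ≤ Dc η (S \ edgePts S p q)) ∧
      (∀ T ⊆ S, T ≠ S → T.Nonempty → IsConvexSet T → Dc η S < Dc η T) := by
  obtain ⟨S, ⟨hSR, hS⟩, hmin⟩ := exists_isMinOn_weightedDc η (Rect n k)
  have hφS : weightedDc η S ≤ 0 := by
    refine (hmin ⟨subset_rfl, isConvexSet_rect n k⟩).trans ?_
    simp only [weightedDc, Dc, card_rect]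
    omega
  have hSne : S.Nonempty := by
    rw [Finset.nonempty_iff_ne_empty]
    rintro rfl
    have := Pc_pos η ∅
    simp only [weightedDc, Dc, Finset.card_empty] at hφS
    omega
  have hsub : ∀ T ⊆ S, T ≠ S → T.Nonempty → IsConvexSet T → Dc η S < Dc η T :=
    fun T hTS hne _ hT => Dc_lt_of_isMinOn hmin hSR (hTS.ssubset_of_ne hne) hT
  refine ⟨S, hSR, ⟨⟨hSne, hS, fun x hx => generated_of_isMinOn hmin hSR hS hx⟩, hsub⟩, ?_,
    fun p q => Dc_add_le_Dc_sdiff_edgePts_of_isMinOn hmin hSR hS, hsub⟩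
  simp only [weightedDc] at hφS
  omega

/-- If `η` is aperiodic and `P_η(R_{n,k}) ≤ nk/2` for some `n, k`, then there
is an `η`-generating set `S ⊆ R_{n,k}` with (i) `D_η(S) ≤ -|S|/2`, (ii) for
every boundary edge `w` of `S`, `D_η(S \ w) ≥ D_η(S) + ⌈|w ∩ S|/2⌉`, and
(iii) every nonempty proper convex subset of `S` has strictly larger
discrepancy. -/
theorem statement14 {A : Type*} [Finite A] (η : ℤ × ℤ → A) (hap : Aperiodic η)
    (n k : ℕ) (hn : 1 ≤ n) (hk : 1 ≤ k)
    (hP : 2 * Pc η (Rect n k) ≤ n * k) :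
    ∃ S : Finset (ℤ × ℤ), S ⊆ Rect n k ∧ Generating η S ∧
      2 * Dc η S ≤ -(S.card : ℤ) ∧
      (∀ p q : ℤ × ℤ, IsEdge S p q →
        Dc η S + ((((edgePts S p q).card + 1) / 2 : ℕ) : ℤ) ≤ Dc η (S \ edgePts S p q)) ∧
      (∀ T ⊆ S, T ≠ S → T.Nonempty → IsConvexSet T → Dc η S < Dc η T) :=
  statement14_general η n k hP

end Nivat
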